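/- Let R(s) = Σ_{i=1}^n R_i(s) e^{-h_i s} be a neutral-type delay system as above with ξ_i = lim_{ω→∞} R_i(jω)/R_1(jω), and suppose the polynomial φ(r) = 1 + Σ_{i=2}^n ξ_i r^{h_i − h_1} (integer delays h_i) has a root r_0 with |r_0| < 1 and additionally each R_i has no poles in Re(s) ≥ 0. Then R has infinitely many zeros in the open right half-plane Re(s) > 0. More precisely, the zeros of R in the strip {0 < Re(s) < −ln|r_0| + 1} form an infinite set. -/

import Mathlib

/-!
Dividing `R` by `R_{i₀}(s) e^{-h_{i₀} s}` leaves
`G(s) = ∑ᵢ (R_i / R_{i₀})(s) e^{-(h_i - h_{i₀}) s}`. A rational function that converges along the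
imaginary axis converges at infinity, so `R_i / R_{i₀} → ξ_i` as `|s| → ∞`, and the translates
`G(s + 2πik)` converge, uniformly on compact sets, to the `2πi`-periodic entire function
`g(s) = φ(e^{-s})`. This `g` vanishes at `s₀ = -log r₀`, with `Re s₀ = -ln|r₀| > 0`, and is not
identically zero, so `|g|` is bounded below on a small circle around `s₀`. By the minimum modulus
principle `G(· + 2πik)` then has a zero inside that circle for every large `k`; these are zeros of
`R` near `Re s = -ln|r₀|` with imaginary parts tending to infinity.
-/

open Complex Polynomial Filter Finset

/-- The `i`-th rational term `R_i(s) = p_i(s)/q_i(s)` viewed as a function on `ℂ`. -/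
noncomputable def ratTerm {n : ℕ} (p q : Fin n → Polynomial ℝ) (i : Fin n) (s : ℂ) : ℂ :=
  ((p i).map (algebraMap ℝ ℂ)).eval s / ((q i).map (algebraMap ℝ ℂ)).eval s

/-- The delay system `R(s) = ∑ᵢ R_i(s) e^{-h_i s}` with integer delays. -/
noncomputable def delaySys {n : ℕ} (p q : Fin n → Polynomial ℝ) (h : Fin n → ℕ) (s : ℂ) : ℂ :=
  ∑ i : Fin n, ratTerm p q i s * Complex.exp (-(h i : ℂ) * s)

open Bornology Metric Asymptotics Topology Set
open scoped Real

namespace Polynomial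

variable {𝕜 : Type*} [NormedField 𝕜] {P Q : 𝕜[X]}

lemma eventually_cobounded_eval_ne_zero (hP : P ≠ 0) : ∀ᶠ z in cobounded 𝕜, P.eval z ≠ 0 := by
  filter_upwards [isEquivalent_cobounded_leading_monomial.symm.isBigO.eq_zero_imp,
    eventually_ne_cobounded 0] with z hPz hz hzero
  simpa [leadingCoeff_ne_zero.mpr hP, hz] using hPz hzero

lemma tendsto_eval_div_eval_cobounded (h : P.natDegree ≤ Q.natDegree) :
    Tendsto (fun z => P.eval z / Q.eval z) (cobounded 𝕜)
      (𝓝 (P.coeff Q.natDegree / Q.leadingCoeff)) := by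
  rcases h.lt_or_eq with hlt | heq
  · rw [coeff_eq_zero_of_natDegree_lt hlt, zero_div]
    exact (isLittleO_cobounded_of_degree_lt (degree_lt_degree hlt)).tendsto_div_nhds_zero
  · have hequiv := (isEquivalent_cobounded_leading_monomial (P := P)).div
      (isEquivalent_cobounded_leading_monomial (P := Q))
    rw [show (fun z => P.eval z / Q.eval z) = (fun z => P.eval z) / fun z => Q.eval z from rfl,
      hequiv.tendsto_nhds_iff, ← heq, coeff_natDegree]
    refine tendsto_const_nhds.congr' ?_
    filter_upwards [eventually_ne_cobounded 0] with z hz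
    rw [heq, Pi.div_apply, mul_div_mul_right _ _ (pow_ne_zero _ hz)]

lemma tendsto_norm_eval_div_eval_cobounded (hQ : Q ≠ 0) (h : Q.natDegree < P.natDegree) :
    Tendsto (fun z => ‖P.eval z / Q.eval z‖) (cobounded 𝕜) atTop := by
  have hP : P ≠ 0 := ne_zero_of_natDegree_gt h
  have hzero : Tendsto (fun z => Q.eval z / P.eval z) (cobounded 𝕜) (𝓝[≠] 0) := by
    refine tendsto_nhdsWithin_iff.2 ⟨?_, ?_⟩
    · exact (isLittleO_cobounded_of_degree_lt (degree_lt_degree h)).tendsto_div_nhds_zero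
    · filter_upwards [eventually_cobounded_eval_ne_zero hP, eventually_cobounded_eval_ne_zero hQ]
        with z hPz hQz
      exact div_ne_zero hQz hPz
  simpa only [Function.comp_def, inv_div] using tendsto_norm_inv_nhdsNE_zero_atTop.comp hzero

theorem tendsto_eval_div_eval_cobounded_of_tendsto (hQ : Q ≠ 0) {α : Type*} {l : Filter α}
    [l.NeBot] {f : α → 𝕜} (hf : Tendsto f l (cobounded 𝕜)) {a : 𝕜}
    (ha : Tendsto (fun x => P.eval (f x) / Q.eval (f x)) l (𝓝 a)) :
    Tendsto (fun z => P.eval z / Q.eval z) (cobounded 𝕜) (𝓝 a) := by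
  rcases le_or_gt P.natDegree Q.natDegree with hle | hlt
  · have hlim := tendsto_eval_div_eval_cobounded hle
    rwa [tendsto_nhds_unique ha (hlim.comp hf)]
  · exact absurd ((tendsto_norm_eval_div_eval_cobounded hQ hlt).comp hf)
      (not_tendsto_atTop_of_tendsto_nhds ha.norm)

end Polynomial

namespace Complex

theorem exists_mem_closedBall_eq_zero_of_norm_lt {f : ℂ → ℂ} {c : ℂ} {r : ℝ} (hr : 0 < r)
    (hf : DifferentiableOn ℂ f (closedBall c r)) (hlt : ∀ z ∈ sphere c r, ‖f c‖ < ‖f z‖) :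
    ∃ z ∈ closedBall c r, f z = 0 := by
  by_contra! hne
  have hd : DiffContOnCl ℂ (fun z => (f z)⁻¹) (ball c r) := by
    rw [← closure_ball c hr.ne'] at hf hne
    exact (hf.inv hne).diffContOnCl
  obtain ⟨z, hz, hmax⟩ := exists_mem_frontier_isMaxOn_norm isBounded_ball (nonempty_ball.2 hr) hd
  rw [frontier_ball c hr.ne'] at hz
  have hcz : ‖(f c)⁻¹‖ ≤ ‖(f z)⁻¹‖ :=
    hmax (by rw [closure_ball c hr.ne']; exact mem_closedBall_self hr.le)
  rw [norm_inv, norm_inv] at hcz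
  exact (hlt z hz).not_ge ((inv_le_inv₀ (norm_pos_iff.2 (hne c (mem_closedBall_self hr.le)))
    (norm_pos_iff.2 (hne z (sphere_subset_closedBall hz)))).1 hcz)

theorem eventually_exists_mem_closedBall_eq_zero {α : Type*} {l : Filter α} {F : α → ℂ → ℂ}
    {g : ℂ → ℂ} {c : ℂ} {r : ℝ} (hr : 0 < r)
    (hF : ∀ᶠ k in l, DifferentiableOn ℂ (F k) (closedBall c r))
    (hFg : TendstoUniformlyOn F g l (closedBall c r)) (hg : ContinuousOn g (sphere c r))
    (hgc : g c = 0) (hg_ne : ∀ z ∈ sphere c r, g z ≠ 0) :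
    ∀ᶠ k in l, ∃ z ∈ closedBall c r, F k z = 0 := by
  obtain ⟨z₀, hz₀, hmin⟩ := (isCompact_sphere c r).exists_isMinOn
    (NormedSpace.sphere_nonempty.2 hr.le) hg.norm
  have hε : 0 < ‖g z₀‖ := norm_pos_iff.2 (hg_ne z₀ hz₀)
  filter_upwards [hF, Metric.tendstoUniformlyOn_iff.1 hFg _ (half_pos hε)] with k hFk hclose
  refine exists_mem_closedBall_eq_zero_of_norm_lt hr hFk fun z hz => ?_
  have hcz := hclose c (mem_closedBall_self hr.le)
  have hzz := hclose z (sphere_subset_closedBall hz)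
  have hgz : ‖g z₀‖ ≤ ‖g z‖ := hmin hz
  rw [dist_eq_norm, hgc, zero_sub, norm_neg] at hcz
  rw [dist_eq_norm] at hzz
  linarith [norm_sub_norm_le (g z) (F k z)]

theorem exists_sphere_ne_zero {g : ℂ → ℂ} (hg : Differentiable ℂ g) (hne : ∃ x, g x ≠ 0)
    (c : ℂ) {δ : ℝ} (hδ : 0 < δ) : ∃ r ∈ Ioo 0 δ, ∀ z ∈ sphere c r, g z ≠ 0 := by
  have hana : AnalyticOnNhd ℂ g univ := fun z _ => hg.analyticAt z
  rcases (hg.analyticAt c).eventually_eq_zero_or_eventually_ne_zero with hzero | hne_zero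
  · obtain ⟨x, hx⟩ := hne
    exact absurd (hana.eqOn_zero_of_preconnected_of_eventuallyEq_zero isPreconnected_univ
      (mem_univ c) hzero (mem_univ x)) hx
  · obtain ⟨ρ, hρ, hball⟩ := Metric.eventually_nhds_iff.1 (eventually_nhdsWithin_iff.1 hne_zero)
    refine ⟨min ρ δ / 2, ⟨by positivity, by linarith [min_le_right ρ δ]⟩, fun z hz => ?_⟩
    rw [mem_sphere] at hz
    refine hball (by linarith [min_le_left ρ δ]) fun hzc => ?_
    rw [hzc, dist_self] at hz
    linarith [lt_min hρ hδ]

end Complex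

section Translates

variable {α E : Type*} [SeminormedAddCommGroup E] {l : Filter α} {t : α → E} {K : Set E}

theorem tendsto_add_prod_principal_cobounded (ht : Tendsto t l (cobounded E))
    (hK : IsBounded K) : Tendsto (fun q : α × E => q.2 + t q.1) (l ×ˢ 𝓟 K) (cobounded E) := by
  obtain ⟨R, hR⟩ := hK.exists_norm_le
  rw [← tendsto_norm_atTop_iff_cobounded] at ht ⊢
  refine tendsto_atTop_mono' _ ?_ (tendsto_atTop_add_const_right _ (-R) (ht.comp tendsto_fst))
  refine eventually_prod_principal_iff.2 (Eventually.of_forall fun k z hz => ?_)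
  have := norm_sub_le (z + t k) z
  rw [add_sub_cancel_left] at this
  simp only [Function.comp_apply]
  linarith [hR z hz]

theorem Set.infinite_of_eventually_exists_add_mem [l.NeBot] (ht : Tendsto t l (cobounded E))
    (hK : IsBounded K) {S : Set E} (h : ∀ᶠ k in l, ∃ z ∈ K, z + t k ∈ S) : S.Infinite := by
  intro hS
  obtain ⟨R, hR⟩ := hK.exists_norm_le
  obtain ⟨B, hB⟩ := hS.isBounded.exists_norm_le
  obtain ⟨k, ⟨z, hz, hzS⟩, hk⟩ :=
    (h.and (ht.eventually (eventually_cobounded_le_norm (R + B + 1)))).exists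
  have := norm_sub_le (z + t k) z
  rw [add_sub_cancel_left] at this
  linarith [hR z hz, hB _ hzS]

end Translates

theorem tendstoUniformlyOn_sum_mul_comp_add {α ι 𝕜 : Type*} [NormedField 𝕜] {l : Filter α}
    {t : α → 𝕜} (ht : Tendsto t l (cobounded 𝕜)) {K : Set 𝕜} (hK : IsCompact K) (s : Finset ι)
    {u v : ι → 𝕜 → 𝕜} {ξ : ι → 𝕜} (hu : ∀ i ∈ s, Tendsto (u i) (cobounded 𝕜) (𝓝 (ξ i)))
    (hv : ∀ i ∈ s, Continuous (v i)) :
    TendstoUniformlyOn (fun k z => ∑ i ∈ s, u i (z + t k) * v i z)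
      (fun z => ∑ i ∈ s, ξ i * v i z) l K := by
  rw [tendstoUniformlyOn_iff_tendsto, uniformity_eq_comap_nhds_zero 𝕜, tendsto_comap_iff]
  simp only [Function.comp_def, ← Finset.sum_sub_distrib, ← sub_mul]
  rw [← Finset.sum_const_zero (s := s)]
  refine tendsto_finsetSum s fun i hi => ?_
  obtain ⟨C, hC⟩ := hK.exists_bound_of_continuousOn (hv i hi).continuousOn
  refine Tendsto.zero_mul_isBoundedUnder_le ?_ (isBoundedUnder_of_eventually_le (a := C) ?_)
  · exact tendsto_sub_nhds_zero_iff.2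
      ((hu i hi).comp (tendsto_add_prod_principal_cobounded ht hK.isBounded))
  · exact eventually_prod_principal_iff.2 (Eventually.of_forall fun _ z hz => hC z hz)

theorem Polynomial.exists_eval_exp_neg_ne_zero {P : ℂ[X]} (hP : P.eval 0 ≠ 0) :
    ∃ z : ℂ, P.eval (exp (-z)) ≠ 0 := by
  have hexp : Tendsto (fun x : ℝ => exp (-(x : ℂ))) atTop (𝓝 0) :=
    tendsto_exp_nhds_zero_iff.2 (by simpa using tendsto_neg_atTop_atBot)
  obtain ⟨x, hx⟩ := (((P.continuous.tendsto 0).comp hexp).eventually_ne hP).exists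
  exact ⟨x, hx⟩

lemma tendsto_natCast_mul_two_pi_I_cobounded :
    Tendsto (fun k : ℕ => (k : ℂ) * (2 * π * I)) atTop (cobounded ℂ) := by
  rw [← tendsto_norm_atTop_iff_cobounded]
  simpa [abs_of_pos Real.pi_pos] using
    tendsto_natCast_atTop_atTop.atTop_mul_const (by positivity : (0 : ℝ) < 2 * π)

lemma abs_re_add_natCast_mul_two_pi_I_sub_le {z c : ℂ} {r : ℝ} (hz : z ∈ closedBall c r) (k : ℕ) :
    |(z + k * (2 * π * I)).re - c.re| ≤ r := by
  simpa using (abs_re_le_norm (z - c)).trans (mem_closedBall_iff_norm.1 hz)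

section DelaySystem

variable {n : ℕ} (p q : Fin n → ℝ[X]) (h : Fin n → ℕ) (i0 : Fin n)

lemma ratTerm_div_ratTerm (i j : Fin n) (z : ℂ) :
    ratTerm p q i z / ratTerm p q j z =
      ((p i).map (algebraMap ℝ ℂ) * (q j).map (algebraMap ℝ ℂ)).eval z /
        ((q i).map (algebraMap ℝ ℂ) * (p j).map (algebraMap ℝ ℂ)).eval z := by
  simp only [ratTerm, eval_mul, div_div_div_eq]

variable {p q}

lemma differentiableAt_ratTerm {i : Fin n} {z : ℂ}
    (hz : ((q i).map (algebraMap ℝ ℂ)).eval z ≠ 0) : DifferentiableAt ℂ (ratTerm p q i) z :=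
  (Polynomial.differentiableAt _).div (Polynomial.differentiableAt _) hz

lemma eventually_cobounded_ratTerm_ne_zero {i : Fin n} (hp : p i ≠ 0) (hq : q i ≠ 0) :
    ∀ᶠ z in cobounded ℂ, ratTerm p q i z ≠ 0 := by
  filter_upwards [eventually_cobounded_eval_ne_zero (map_ne_zero hp (f := algebraMap ℝ ℂ)),
    eventually_cobounded_eval_ne_zero (map_ne_zero hq (f := algebraMap ℝ ℂ))] with z hpz hqz
  exact div_ne_zero hpz hqz

lemma tendsto_ratTerm_div_cobounded {i j : Fin n} (hq : q i ≠ 0) (hp : p j ≠ 0) {ξ : ℂ}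
    (hξ : Tendsto (fun ω : ℝ => ratTerm p q i (I * ω) / ratTerm p q j (I * ω)) atTop (𝓝 ξ)) :
    Tendsto (fun z => ratTerm p q i z / ratTerm p q j z) (cobounded ℂ) (𝓝 ξ) := by
  simp only [ratTerm_div_ratTerm] at hξ ⊢
  refine tendsto_eval_div_eval_cobounded_of_tendsto
    (mul_ne_zero (map_ne_zero hq) (map_ne_zero hp)) ?_ hξ
  rw [← tendsto_norm_atTop_iff_cobounded]
  simpa using tendsto_abs_atTop_atTop

variable (p q)

/-- `R(s) / (R_{i₀}(s) e^{-h_{i₀} s})`. -/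
noncomputable def reducedSys (z : ℂ) : ℂ :=
  ∑ i, ratTerm p q i z / ratTerm p q i0 z * exp (-z) ^ (h i - h i0)

/-- The paper's `φ`. -/
noncomputable def neutralPoly (ξ : Fin n → ℂ) : ℂ[X] :=
  1 + ∑ i ∈ univ.erase i0, C (ξ i) * X ^ (h i - h i0)

variable {p q h i0}

lemma delaySys_eq_mul_reducedSys (hle : ∀ i, h i0 ≤ h i) {z : ℂ} (hz : ratTerm p q i0 z ≠ 0) :
    delaySys p q h z = ratTerm p q i0 z * exp (-(h i0 : ℂ) * z) * reducedSys p q h i0 z := by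
  rw [reducedSys, mul_sum]
  refine sum_congr rfl fun i _ => ?_
  rw [← exp_nat_mul, Nat.cast_sub (hle i),
    show -(h i : ℂ) * z = -(h i0 : ℂ) * z + (h i - h i0) * -z by ring, exp_add]
  field_simp

lemma differentiableAt_reducedSys {z : ℂ} (hq : ∀ i, ((q i).map (algebraMap ℝ ℂ)).eval z ≠ 0)
    (hz : ratTerm p q i0 z ≠ 0) : DifferentiableAt ℂ (reducedSys p q h i0) z := by
  unfold reducedSys
  exact DifferentiableAt.fun_sum fun i _ =>
    ((differentiableAt_ratTerm (hq i)).div (differentiableAt_ratTerm (hq i0)) hz).mul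
      (differentiableAt_id.neg.cexp.pow _)

lemma eval_neutralPoly {ξ : Fin n → ℂ} (hξ : ξ i0 = 1) (r : ℂ) :
    (neutralPoly h i0 ξ).eval r = ∑ i, ξ i * r ^ (h i - h i0) := by
  rw [← add_sum_erase _ _ (mem_univ i0), hξ, Nat.sub_self, pow_zero, one_mul]
  simp [neutralPoly, eval_finsetSum]

lemma eval_zero_neutralPoly (hlt : ∀ i ≠ i0, h i0 < h i) (ξ : Fin n → ℂ) :
    (neutralPoly h i0 ξ).eval 0 = 1 := by
  simp only [neutralPoly, eval_add, eval_one, eval_finsetSum, eval_mul, eval_C, eval_pow, eval_X]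
  rw [sum_eq_zero fun i hi => by rw [zero_pow (Nat.sub_ne_zero_of_lt (hlt i (ne_of_mem_erase hi))),
    mul_zero], add_zero]

lemma tendstoUniformlyOn_reducedSys {ξ : Fin n → ℂ}
    (hu : ∀ i, Tendsto (fun z => ratTerm p q i z / ratTerm p q i0 z) (cobounded ℂ) (𝓝 (ξ i)))
    (hξ : ξ i0 = 1) {K : Set ℂ} (hK : IsCompact K) :
    TendstoUniformlyOn (fun (k : ℕ) z => reducedSys p q h i0 (z + k * (2 * π * I)))
      (fun z => (neutralPoly h i0 ξ).eval (exp (-z))) atTop K := by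
  have := tendstoUniformlyOn_sum_mul_comp_add tendsto_natCast_mul_two_pi_I_cobounded hK univ
    (fun i _ => hu i) (v := fun i z => exp (-z) ^ (h i - h i0)) (fun i _ => by fun_prop)
  simp only [eval_neutralPoly hξ]
  convert this using 3 with k z
  simp only [reducedSys, neg_add, exp_add, exp_neg (_ * _), exp_nat_mul_two_pi_mul_I, inv_one,
    mul_one]

theorem eventually_exists_delaySys_eq_zero
    (hstable : ∀ i, ∀ z : ℂ, 0 ≤ z.re → ((q i).map (algebraMap ℝ ℂ)).eval z ≠ 0)
    (hp : p i0 ≠ 0) (hle : ∀ i, h i0 ≤ h i) {ξ : Fin n → ℂ}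
    (hu : ∀ i, Tendsto (fun z => ratTerm p q i z / ratTerm p q i0 z) (cobounded ℂ) (𝓝 (ξ i)))
    (hξ : ξ i0 = 1) {c : ℂ} {r : ℝ} (hr : 0 < r) (hrc : r ≤ c.re)
    (hc : (neutralPoly h i0 ξ).eval (exp (-c)) = 0)
    (hsph : ∀ z ∈ sphere c r, (neutralPoly h i0 ξ).eval (exp (-z)) ≠ 0) :
    ∀ᶠ k : ℕ in atTop, ∃ z ∈ closedBall c r, delaySys p q h (z + k * (2 * π * I)) = 0 := by
  have hq : ∀ i, q i ≠ 0 := fun i hqi => hstable i 0 le_rfl (by simp [hqi])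
  have hre : ∀ (k : ℕ), ∀ z ∈ closedBall c r, 0 ≤ (z + k * (2 * π * I)).re := fun k z hz => by
    linarith [(abs_le.1 (abs_re_add_natCast_mul_two_pi_I_sub_le hz k)).1]
  have hne : ∀ᶠ k : ℕ in atTop, ∀ z ∈ closedBall c r, ratTerm p q i0 (z + k * (2 * π * I)) ≠ 0 :=
    eventually_prod_principal_iff.1 <|
      (tendsto_add_prod_principal_cobounded tendsto_natCast_mul_two_pi_I_cobounded
        isBounded_closedBall).eventually (eventually_cobounded_ratTerm_ne_zero hp (hq i0))
  have hdiff : ∀ᶠ k : ℕ in atTop, DifferentiableOn ℂ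
      (fun z => reducedSys p q h i0 (z + k * (2 * π * I))) (closedBall c r) := by
    filter_upwards [hne] with k hk z hz
    exact ((differentiableAt_reducedSys (fun i => hstable i _ (hre k z hz)) (hk z hz)).comp z
      (differentiableAt_id.add_const _)).differentiableWithinAt
  filter_upwards [hne, Complex.eventually_exists_mem_closedBall_eq_zero hr hdiff
    (tendstoUniformlyOn_reducedSys hu hξ (isCompact_closedBall c r)) (by fun_prop) hc hsph]
    with k hk ⟨z, hz, hzero⟩
  exact ⟨z, hz, by rw [delaySys_eq_mul_reducedSys hle (hk z hz), hzero, mul_zero]⟩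

theorem infinite_setOf_delaySys_eq_zero_of_eval_neutralPoly_eq_zero
    (hstable : ∀ i, ∀ z : ℂ, 0 ≤ z.re → ((q i).map (algebraMap ℝ ℂ)).eval z ≠ 0)
    (hp : p i0 ≠ 0) (hlt : ∀ i ≠ i0, h i0 < h i) {ξ : Fin n → ℂ}
    (hu : ∀ i, Tendsto (fun z => ratTerm p q i z / ratTerm p q i0 z) (cobounded ℂ) (𝓝 (ξ i)))
    (hξ : ξ i0 = 1) {r₀ : ℂ} (hr₀ : ‖r₀‖ < 1) (hφ : (neutralPoly h i0 ξ).eval r₀ = 0) :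
    {s : ℂ | 0 < s.re ∧ s.re < -Real.log ‖r₀‖ + 1 ∧ delaySys p q h s = 0}.Infinite := by
  have hle i : h i0 ≤ h i := (eq_or_ne i i0).elim (fun e => e ▸ le_rfl) (hlt i · |>.le)
  have hφ0 := eval_zero_neutralPoly hlt ξ
  have hr₀0 : r₀ ≠ 0 := by
    rintro rfl
    simp [hφ0] at hφ
  set c : ℂ := -log r₀
  have hc : c.re = -Real.log ‖r₀‖ := by simp [c, log_re]
  have hc0 : 0 < c.re := by rw [hc]; linarith [Real.log_neg (norm_pos_iff.2 hr₀0) hr₀]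
  obtain ⟨r, ⟨hr, hrc⟩, hsph⟩ := Complex.exists_sphere_ne_zero (by fun_prop)
    (exists_eval_exp_neg_ne_zero (hφ0 ▸ one_ne_zero)) c (lt_min hc0 one_pos)
  have hzeros := eventually_exists_delaySys_eq_zero hstable hp hle hu hξ hr
    (hrc.le.trans (min_le_left _ _)) (by simpa [c, exp_log hr₀0] using hφ) hsph
  refine Set.infinite_of_eventually_exists_add_mem tendsto_natCast_mul_two_pi_I_cobounded
    isBounded_closedBall <| hzeros.mono fun k ⟨z, hz, hzero⟩ => ⟨z, hz, ?_⟩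
  have := abs_le.1 (abs_re_add_natCast_mul_two_pi_I_sub_le hz k)
  exact ⟨by linarith [min_le_left c.re 1], by linarith [min_le_right c.re 1], hzero⟩

end DelaySystem

theorem stmt2_general (n : ℕ) (hn : 0 < n) (p q : Fin n → Polynomial ℝ) (h : Fin n → ℕ)
    (i0 : Fin n) (hi0 : i0 = ⟨0, hn⟩)
    (hmono : StrictMono h)
    (hstable : ∀ i, ∀ z : ℂ, 0 ≤ z.re → ((q i).map (algebraMap ℝ ℂ)).eval z ≠ 0)
    (hp1 : p i0 ≠ 0)
    (ξ : Fin n → ℂ)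
    (hξ : ∀ i, Tendsto (fun ω : ℝ => ratTerm p q i (Complex.I * ω) /
        ratTerm p q i0 (Complex.I * ω)) atTop (nhds (ξ i)))
    (r₀ : ℂ) (hr₀ : ‖r₀‖ < 1)
    (hroot : 1 + ∑ i ∈ Finset.univ.erase i0, ξ i * r₀ ^ (h i - h i0) = 0) :
    {s : ℂ | 0 < s.re ∧ s.re < -Real.log (‖r₀‖) + 1 ∧
        delaySys p q h s = 0}.Infinite ∧
    {s : ℂ | 0 < s.re ∧ delaySys p q h s = 0}.Infinite := by
  have hlt : ∀ i ≠ i0, h i0 < h i := fun i hi => hmono <| by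
    subst hi0
    exact Fin.lt_def.2 (Nat.pos_of_ne_zero fun h0 => hi (Fin.ext h0))
  have hq : ∀ i, q i ≠ 0 := fun i hqi => hstable i 0 le_rfl (by simp [hqi])
  have hu i := tendsto_ratTerm_div_cobounded (hq i) hp1 (hξ i)
  have hξ0 : ξ i0 = 1 := tendsto_nhds_unique (hu i0) <| tendsto_const_nhds.congr' <|
    (eventually_cobounded_ratTerm_ne_zero hp1 (hq i0)).mono fun z hz => (div_self hz).symm
  have hstrip := infinite_setOf_delaySys_eq_zero_of_eval_neutralPoly_eq_zero hstable hp1 hlt hu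
    hξ0 hr₀ (by simpa [neutralPoly, eval_finsetSum] using hroot)
  exact ⟨hstrip, hstrip.mono fun s hs => ⟨hs.1, hs.2.2⟩⟩

/-- if the polynomial `φ` associated with a neutral-type delay system has a
root `r₀` of modulus `< 1` (and the `R_i` have no poles in `Re s ≥ 0`), then `R` has
infinitely many zeros with `Re s > 0`; more precisely, infinitely many in the strip
`0 < Re s < -ln|r₀| + 1`. -/
theorem stmt2 (n : ℕ) (hn : 0 < n) (p q : Fin n → Polynomial ℝ) (h : Fin n → ℕ)
    (i0 : Fin n) (hi0 : i0 = ⟨0, hn⟩)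
    (hmono : StrictMono h)
    (hstable : ∀ i, ∀ z : ℂ, 0 ≤ z.re → ((q i).map (algebraMap ℝ ℂ)).eval z ≠ 0)
    (hproper : ∀ i, (p i).natDegree ≤ (q i).natDegree)
    (hp1 : p i0 ≠ 0)
    (d : Fin n → ℕ) (hd : ∀ i, d i = (q i).natDegree - (p i).natDegree)
    (hneutral : d i0 = (Finset.univ.erase i0).sup d)
    (ξ : Fin n → ℂ)
    (hξ : ∀ i, Tendsto (fun ω : ℝ => ratTerm p q i (Complex.I * ω) /
        ratTerm p q i0 (Complex.I * ω)) atTop (nhds (ξ i)))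
    (r₀ : ℂ) (hr₀ : ‖r₀‖ < 1)
    (hroot : 1 + ∑ i ∈ Finset.univ.erase i0, ξ i * r₀ ^ (h i - h i0) = 0) :
    {s : ℂ | 0 < s.re ∧ s.re < -Real.log (‖r₀‖) + 1 ∧
        delaySys p q h s = 0}.Infinite ∧
    {s : ℂ | 0 < s.re ∧ delaySys p q h s = 0}.Infinite :=
  stmt2_general n hn p q h i0 hi0 hmono hstable hp1 ξ hξ r₀ hr₀ hroot
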